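/- arXiv:0809.3405 — 6 statements merged into one kernel-verified Lean document; each statement's English description precedes it below -/
import Mathlib

section
/- Let f(x) = (e^x − K)⁺ for K > 0 be the call payoff. For z ∈ ℂ with Im z ∈ (1, ∞), the Fourier transform ∫_ℝ e^{izx} f(x) dx exists and equals K^{1+iz} / (iz(1+iz)). -/
open MeasureTheory Complex Set Filter Topology

lemma cexp_mul_integrableOn (c : ℂ) (hc : c.re < 0) (L : ℝ) :
    IntegrableOn (fun x : ℝ => Complex.exp (c * x)) (Ioi L) volume := by
  apply Integrable.mono' (g := fun x : ℝ => Real.exp (-(-c.re) * x))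
      (exp_neg_integrableOn_Ioi L (by linarith))
  · exact (Continuous.cexp (by continuity)).aestronglyMeasurable
  · filter_upwards with x
    simp [Complex.norm_exp, Complex.mul_re]

lemma cexp_mul_tendsto (c : ℂ) (hc : c.re < 0) :
    Tendsto (fun x : ℝ => Complex.exp (c * x)) atTop (𝓝 0) := by
  rw [tendsto_zero_iff_norm_tendsto_zero]
  have h : (fun x : ℝ => ‖Complex.exp (c * x)‖) = fun x : ℝ => Real.exp (c.re * x) := by
    ext x; simp [Complex.norm_exp, Complex.mul_re]
  rw [h]
  exact Real.tendsto_exp_atBot.comp ((tendsto_const_mul_atBot_of_neg hc).mpr tendsto_id)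

lemma integral_cexp_mul_Ioi (c : ℂ) (hc : c.re < 0) (L : ℝ) :
    ∫ x in Ioi L, Complex.exp (c * x) = -Complex.exp (c * L) / c := by
  have hc0 : c ≠ 0 := fun h => by simp [h] at hc
  have hderiv : ∀ x ∈ Ici L, HasDerivAt (fun x : ℝ => Complex.exp (c * x) / c)
      (Complex.exp (c * x)) x := by
    intro x _
    have h1 : HasDerivAt (fun w : ℂ => Complex.exp (c * w) / c) (Complex.exp (c * x)) (x : ℂ) := by
      have := (((hasDerivAt_id (x : ℂ)).const_mul c).cexp).div_const c
      simpa [mul_comm, mul_div_assoc, mul_div_cancel_left₀ _ hc0] using this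
    exact h1.comp_ofReal
  have := integral_Ioi_of_hasDerivAt_of_tendsto' hderiv (cexp_mul_integrableOn c hc L)
    ((cexp_mul_tendsto c hc).div_const c)
  rw [this]
  ring

/-- Fourier transform of the call payoff `f(x) = (e^x - K)⁺`, `K > 0`: for `z ∈ ℂ` with
`Im z ∈ (1,∞)`, `∫_ℝ e^{izx} f(x) dx` exists and equals `K^{1+iz}/(iz(1+iz))`. -/
theorem fourier_call_payoff (K : ℝ) (hK : 0 < K) (z : ℂ) (hz : 1 < z.im) :
    Integrable (fun x : ℝ =>
      Complex.exp (Complex.I * z * x) * ((max (Real.exp x - K) 0 : ℝ) : ℂ))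
      (volume : Measure ℝ) ∧
    ∫ x : ℝ, Complex.exp (Complex.I * z * x) * ((max (Real.exp x - K) 0 : ℝ) : ℂ) =
      Complex.exp ((1 + Complex.I * z) * Real.log K) /
        (Complex.I * z * (1 + Complex.I * z)) := by
  set a : ℂ := 1 + Complex.I * z with ha
  set b : ℂ := Complex.I * z with hb
  set L : ℝ := Real.log K with hL
  have hbre : b.re = -z.im := by simp [hb, Complex.mul_re]
  have hare : a.re = 1 - z.im := by rw [ha]; simp [Complex.add_re, hbre]; ring
  have hbneg : b.re < 0 := by rw [hbre]; linarith
  have haneg : a.re < 0 := by rw [hare]; linarith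
  have hb0 : b ≠ 0 := fun h => by rw [h] at hbneg; simp at hbneg
  have ha0 : a ≠ 0 := fun h => by rw [h] at haneg; simp at haneg
  set g : ℝ → ℂ := fun x => Complex.exp (a * x) - K * Complex.exp (b * x) with hg
  have hfun : (fun x : ℝ =>
      Complex.exp (b * x) * ((max (Real.exp x - K) 0 : ℝ) : ℂ)) =
      Set.indicator (Ioi L) g := by
    ext x
    rcases le_or_gt x L with h | h
    · have hle : Real.exp x ≤ K := by
        rw [hL] at h
        calc Real.exp x ≤ Real.exp (Real.log K) := Real.exp_le_exp.2 h
          _ = K := Real.exp_log hK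
      rw [Set.indicator_of_notMem (by simpa using h)]
      simp [max_eq_right (by linarith : Real.exp x - K ≤ 0)]
    · have hlt : K < Real.exp x := by
        rw [hL] at h
        calc K = Real.exp (Real.log K) := (Real.exp_log hK).symm
          _ < Real.exp x := Real.exp_lt_exp.2 h
      rw [Set.indicator_of_mem (mem_Ioi.mpr h)]
      rw [max_eq_left (by linarith : (0:ℝ) ≤ Real.exp x - K)]
      simp only [hg, ha, Complex.ofReal_sub, Complex.ofReal_exp, add_mul, one_mul,
        Complex.exp_add, hb]
      ring
  have hmeas : MeasurableSet (Ioi L) := measurableSet_Ioi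
  have hgint : IntegrableOn g (Ioi L) volume :=
    (cexp_mul_integrableOn a haneg L).sub ((cexp_mul_integrableOn b hbneg L).const_mul K)
  have hint : Integrable (Set.indicator (Ioi L) g) volume :=
    (integrable_indicator_iff hmeas).2 hgint
  refine ⟨hfun ▸ hint, ?_⟩
  rw [hfun, integral_indicator hmeas]
  rw [integral_sub (cexp_mul_integrableOn a haneg L)
      ((cexp_mul_integrableOn b hbneg L).const_mul K),
    integral_const_mul, integral_cexp_mul_Ioi a haneg L,
    integral_cexp_mul_Ioi b hbneg L]
  have hexp : Complex.exp (a * L) = K * Complex.exp (b * L) := by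
    have h1 : a * (L : ℂ) = L + b * L := by rw [ha, hb]; ring
    rw [h1, Complex.exp_add, ← Complex.ofReal_exp, hL, Real.exp_log hK]
  have hab : a = b + 1 := by rw [ha, hb]; ring
  have hb1 : b + 1 ≠ 0 := hab ▸ ha0
  rw [hexp, hab]
  field_simp
  ring
end

section
/- Let f(x) = (K − e^x)⁺ for K > 0 be the put payoff. For z ∈ ℂ with Im z ∈ (−∞, 0), the Fourier transform ∫_ℝ e^{izx} f(x) dx exists and equals K^{1+iz} / (iz(1+iz)). -/
open MeasureTheory Complex Set

/-!
Since `(K - eˣ)⁺` vanishes for `x > log K`, the integrand is `K e^{cx} - e^{(1+c)x}` on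
`(-∞, log K]` and zero elsewhere, with `c = iz`; `Im z < 0` means `Re c > 0`, so both
exponentials are integrable there, with primitives `e^{cx}/c` and `e^{(1+c)x}/(1+c)`.
At `x = log K` one has `K e^{c log K} = e^{(1+c) log K}`, and the two terms combine to
`K^{1+c} (1/c - 1/(1+c)) = K^{1+c} / (c(1+c))`.
-/

lemma cexp_mul_mul_max_sub_exp_eq_indicator {K : ℝ} (hK : 0 < K) (c : ℂ) :
    (fun x : ℝ => Complex.exp (c * x) * ((max (K - Real.exp x) 0 : ℝ) : ℂ)) =
      (Iic (Real.log K)).indicator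
        (fun x : ℝ => K * Complex.exp (c * x) - Complex.exp ((1 + c) * x)) := by
  funext x
  by_cases hx : x ≤ Real.log K
  · have hexp : Real.exp x ≤ K := (Real.le_log_iff_exp_le hK).1 hx
    rw [indicator_of_mem (mem_Iic.2 hx), max_eq_left (sub_nonneg.2 hexp), add_mul, one_mul,
      Complex.exp_add, Complex.ofReal_sub, Complex.ofReal_exp]
    ring
  · have hexp : K < Real.exp x := (Real.log_lt_iff_lt_exp hK).1 (not_le.1 hx)
    rw [indicator_of_notMem (notMem_Iic.2 (not_le.1 hx)), max_eq_right (sub_nonpos.2 hexp.le), Complex.ofReal_zero,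
      mul_zero]

lemma integrableOn_const_mul_cexp_sub_cexp_Iic {c : ℂ} (hc : 0 < c.re) (K L : ℝ) :
    IntegrableOn (fun x : ℝ => K * Complex.exp (c * x) - Complex.exp ((1 + c) * x)) (Iic L) :=
  ((integrableOn_exp_mul_complex_Iic hc L).const_mul _).sub
    (integrableOn_exp_mul_complex_Iic (by rw [add_re, one_re]; linarith) L)

lemma integral_const_mul_cexp_sub_cexp_Iic_log {K : ℝ} (hK : 0 < K) {c : ℂ} (hc : 0 < c.re) :
    ∫ x in Iic (Real.log K), (K * Complex.exp (c * x) - Complex.exp ((1 + c) * x)) =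
      Complex.exp ((1 + c) * Real.log K) / (c * (1 + c)) := by
  have hc' : 0 < (1 + c).re := by rw [add_re, one_re]; linarith
  have hc0 : c ≠ 0 := fun h => by simp [h] at hc
  have hc0' : 1 + c ≠ 0 := fun h => by simp [h] at hc'
  have hK_exp : (K : ℂ) * Complex.exp (c * Real.log K) = Complex.exp ((1 + c) * Real.log K) := by
    rw [add_mul, one_mul, Complex.exp_add, ← Complex.ofReal_exp, Real.exp_log hK, mul_comm]
  rw [integral_sub ((integrableOn_exp_mul_complex_Iic hc _).const_mul _)
      (integrableOn_exp_mul_complex_Iic hc' _), integral_const_mul,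
    integral_exp_mul_complex_Iic hc, integral_exp_mul_complex_Iic hc', ← mul_div_assoc, hK_exp]
  field_simp
  ring

/-- Fourier transform of the put payoff `f(x) = (K - e^x)⁺`, `K > 0`: for `z ∈ ℂ` with
`Im z ∈ (-∞,0)`, `∫_ℝ e^{izx} f(x) dx` exists and equals `K^{1+iz}/(iz(1+iz))`. -/
theorem fourier_put_payoff (K : ℝ) (hK : 0 < K) (z : ℂ) (hz : z.im < 0) :
    Integrable (fun x : ℝ =>
      Complex.exp (Complex.I * z * x) * ((max (K - Real.exp x) 0 : ℝ) : ℂ))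
      (volume : Measure ℝ) ∧
    ∫ x : ℝ, Complex.exp (Complex.I * z * x) * ((max (K - Real.exp x) 0 : ℝ) : ℂ) =
      Complex.exp ((1 + Complex.I * z) * Real.log K) /
        (Complex.I * z * (1 + Complex.I * z)) := by
  have hc : 0 < (Complex.I * z).re := by rw [mul_re, I_re, I_im]; linarith
  rw [cexp_mul_mul_max_sub_exp_eq_indicator hK, integrable_indicator_iff measurableSet_Iic,
    integral_indicator measurableSet_Iic]
  exact ⟨integrableOn_const_mul_cexp_sub_cexp_Iic hc K _,
    integral_const_mul_cexp_sub_cexp_Iic_log hK hc⟩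
end

section
/- Let f(x) = e^x (e^x − K)⁺ for K > 0 (self-quanto call payoff). For z ∈ ℂ with Im z ∈ (2, ∞), the Fourier transform ∫_ℝ e^{izx} f(x) dx exists and equals K^{2+iz} / ((1+iz)(2+iz)). -/
open MeasureTheory Complex Set

/-!
On `{x > log K}` the payoff is `e^{2x} - K e^x` and it vanishes elsewhere, so the transform is
`∫_{log K}^∞ (e^{(2+iz)x} - K e^{(1+iz)x}) dx`. Both exponentials decay since `Im z > 2`, and
the two boundary terms `-K^{2+iz}/(2+iz)` and `K · K^{1+iz}/(1+iz)` combine to the claimed value.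
-/

lemma cexp_mul_mul_exp_mul_exp_sub (s : ℂ) (K x : ℝ) :
    cexp (s * x) * ((Real.exp x * (Real.exp x - K) : ℝ) : ℂ) =
      cexp ((2 + s) * x) - K * cexp ((1 + s) * x) := by
  rw [show (2 + s) * x = s * x + x + x by ring, show (1 + s) * x = s * x + x by ring]
  simp only [exp_add]
  push_cast
  ring

lemma cexp_mul_exp_mul_max_exp_sub_eq_indicator {K : ℝ} (hK : 0 < K) (s : ℂ) :
    (fun x : ℝ => cexp (s * x) * ((Real.exp x * max (Real.exp x - K) 0 : ℝ) : ℂ)) =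
      (Ioi (Real.log K)).indicator fun x : ℝ => cexp ((2 + s) * x) - K * cexp ((1 + s) * x) := by
  funext x
  by_cases hx : Real.log K < x
  · have hKx : K < Real.exp x := (Real.log_lt_iff_lt_exp hK).mp hx
    rw [indicator_of_mem (mem_Ioi.2 hx), max_eq_left (by linarith), cexp_mul_mul_exp_mul_exp_sub]
  · have hxK : Real.exp x ≤ K := (Real.le_log_iff_exp_le hK).mp (not_lt.mp hx)
    rw [indicator_of_notMem (mt mem_Ioi.1 hx), max_eq_right (by linarith), mul_zero, ofReal_zero,
      mul_zero]

lemma integrableOn_cexp_sub_mul_cexp_Ioi {s : ℂ} (hs : s.re < -2) (K a : ℝ) :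
    IntegrableOn (fun x : ℝ => cexp ((2 + s) * x) - K * cexp ((1 + s) * x)) (Ioi a) :=
  (integrableOn_exp_mul_complex_Ioi (by rw [add_re, re_ofNat]; linarith) a).sub
    ((integrableOn_exp_mul_complex_Ioi (by rw [add_re, one_re]; linarith) a).const_mul _)

lemma integral_cexp_sub_mul_cexp_Ioi_log {s : ℂ} (hs : s.re < -2) {K : ℝ} (hK : 0 < K) :
    ∫ x in Ioi (Real.log K), cexp ((2 + s) * x) - K * cexp ((1 + s) * x) =
      cexp ((2 + s) * Real.log K) / ((1 + s) * (2 + s)) := by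
  have hs₁ : (1 + s).re < 0 := by rw [add_re, one_re]; linarith
  have hs₂ : (2 + s).re < 0 := by rw [add_re, re_ofNat]; linarith
  have hs₁0 : 1 + s ≠ 0 := fun h => by simp [h] at hs₁
  have hs₂0 : 2 + s ≠ 0 := fun h => by simp [h] at hs₂
  have hK_mul : (K : ℂ) * cexp ((1 + s) * Real.log K) = cexp ((2 + s) * Real.log K) := by
    have hK_exp : (K : ℂ) = cexp (Real.log K) := by rw [← ofReal_exp, Real.exp_log hK]
    rw [hK_exp, ← exp_add]
    ring_nf
  rw [integral_sub (integrableOn_exp_mul_complex_Ioi hs₂ _)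
      ((integrableOn_exp_mul_complex_Ioi hs₁ _).const_mul _), integral_const_mul,
    integral_exp_mul_complex_Ioi hs₂, integral_exp_mul_complex_Ioi hs₁, mul_div_assoc', mul_neg,
    hK_mul]
  field_simp
  ring

/-- Fourier transform of the self-quanto call payoff `f(x) = e^x (e^x - K)⁺`, `K > 0`:
for `z ∈ ℂ` with `Im z ∈ (2,∞)`, `∫_ℝ e^{izx} f(x) dx` exists and equals
`K^{2+iz}/((1+iz)(2+iz))`. -/
theorem fourier_self_quanto (K : ℝ) (hK : 0 < K) (z : ℂ) (hz : 2 < z.im) :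
    Integrable (fun x : ℝ =>
      Complex.exp (Complex.I * z * x) * ((Real.exp x * max (Real.exp x - K) 0 : ℝ) : ℂ))
      (volume : Measure ℝ) ∧
    ∫ x : ℝ, Complex.exp (Complex.I * z * x) *
        ((Real.exp x * max (Real.exp x - K) 0 : ℝ) : ℂ) =
      Complex.exp ((2 + Complex.I * z) * Real.log K) /
        ((1 + Complex.I * z) * (2 + Complex.I * z)) := by
  have hs : (I * z).re < -2 := by rw [I_mul_re]; linarith
  rw [cexp_mul_exp_mul_max_exp_sub_eq_indicator hK, integrable_indicator_iff measurableSet_Ioi,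
    integral_indicator measurableSet_Ioi]
  exact ⟨integrableOn_cexp_sub_mul_cexp_Ioi hs K _, integral_cexp_sub_mul_cexp_Ioi_log hs hK⟩
end

section
/- Let f(x) = ((e^x − K)⁺)² for K > 0 (power call payoff of order 2). For z ∈ ℂ with Im z ∈ (2, ∞), the Fourier transform ∫_ℝ e^{izx} f(x) dx exists and equals −2 K^{2+iz} / (iz(1+iz)(2+iz)). -/
open MeasureTheory Complex Set

/-! On `(log K, ∞)` the payoff is `(eˣ - K)² = e²ˣ - 2K eˣ + K²` and it vanishes elsewhere, so the
transform is a combination of three integrals `∫_{log K}^∞ e^{ax} dx = -K^a / a` with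
`a = iz, 1 + iz, 2 + iz`, all of negative real part since `Im z > 2`. -/

lemma cexp_mul_sq_max_sub_eq_indicator {K : ℝ} (hK : 0 < K) (w : ℂ) (x : ℝ) :
    cexp (w * x) * (((max (Real.exp x - K) 0) ^ 2 : ℝ) : ℂ) =
      (Ioi (Real.log K)).indicator
        (fun x : ℝ => cexp ((2 + w) * x) - 2 * K * cexp ((1 + w) * x) + K ^ 2 * cexp (w * x))
        x := by
  by_cases hx : x ∈ Ioi (Real.log K)
  · have hKx : K < Real.exp x := by rwa [mem_Ioi, Real.log_lt_iff_lt_exp hK] at hx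
    have hshift : ∀ n : ℕ, cexp ((n + w) * x) = cexp x ^ n * cexp (w * x) := fun n => by
      rw [add_mul, exp_add, exp_nat_mul]
    rw [indicator_of_mem hx, max_eq_left (by linarith)]
    have h1 := hshift 1
    have h2 := hshift 2
    push_cast at h1 h2 ⊢
    rw [h1, h2]
    ring
  · have hxK : Real.exp x ≤ K := by
      rwa [mem_Ioi, not_lt, ← Real.exp_le_exp, Real.exp_log hK] at hx
    rw [indicator_of_notMem hx, max_eq_right (by linarith)]
    simp

lemma re_add_neg_of_re_lt_neg_two {w : ℂ} (hw : w.re < -2) :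
    (2 + w).re < 0 ∧ (1 + w).re < 0 ∧ w.re < 0 := by
  simp only [add_re, re_ofNat, one_re]
  exact ⟨by linarith, by linarith, by linarith⟩

lemma integrableOn_Ioi_quadratic_cexp {w : ℂ} (hw : w.re < -2) (K : ℂ) (c : ℝ) :
    IntegrableOn
      (fun x : ℝ => cexp ((2 + w) * x) - 2 * K * cexp ((1 + w) * x) + K ^ 2 * cexp (w * x))
      (Ioi c) :=
  have ⟨h2, h1, h0⟩ := re_add_neg_of_re_lt_neg_two hw
  ((integrableOn_exp_mul_complex_Ioi h2 c).sub
      ((integrableOn_exp_mul_complex_Ioi h1 c).const_mul _)).add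
    ((integrableOn_exp_mul_complex_Ioi h0 c).const_mul _)

lemma integral_Ioi_quadratic_cexp {w : ℂ} (hw : w.re < -2) (K : ℂ) (c : ℝ) :
    ∫ x in Ioi c, (cexp ((2 + w) * x) - 2 * K * cexp ((1 + w) * x) + K ^ 2 * cexp (w * x)) =
      -cexp ((2 + w) * c) / (2 + w) + 2 * K * (cexp ((1 + w) * c) / (1 + w))
        - K ^ 2 * (cexp (w * c) / w) := by
  obtain ⟨h2, h1, h0⟩ := re_add_neg_of_re_lt_neg_two hw
  have i2 : IntegrableOn (fun x : ℝ => cexp ((2 + w) * x)) (Ioi c) :=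
    integrableOn_exp_mul_complex_Ioi h2 c
  have i1 : IntegrableOn (fun x : ℝ => 2 * K * cexp ((1 + w) * x)) (Ioi c) :=
    (integrableOn_exp_mul_complex_Ioi h1 c).const_mul _
  have i0 : IntegrableOn (fun x : ℝ => K ^ 2 * cexp (w * x)) (Ioi c) :=
    (integrableOn_exp_mul_complex_Ioi h0 c).const_mul _
  have i21 : IntegrableOn
      (fun x : ℝ => cexp ((2 + w) * x) - 2 * K * cexp ((1 + w) * x)) (Ioi c) := i2.sub i1
  rw [integral_add i21 i0, integral_sub i2 i1, integral_const_mul, integral_const_mul,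
    integral_exp_mul_complex_Ioi h2, integral_exp_mul_complex_Ioi h1,
    integral_exp_mul_complex_Ioi h0]
  ring

lemma integral_Ioi_log_quadratic_cexp {K : ℝ} (hK : 0 < K) {w : ℂ} (hw : w.re < -2) :
    ∫ x in Ioi (Real.log K),
        (cexp ((2 + w) * x) - 2 * K * cexp ((1 + w) * x) + K ^ 2 * cexp (w * x)) =
      -2 * cexp ((2 + w) * Real.log K) / (w * (1 + w) * (2 + w)) := by
  have hne : ∀ u : ℂ, u.re < 0 → u ≠ 0 := fun u hu h => by simp [h] at hu
  obtain ⟨h2, h1, h0⟩ := re_add_neg_of_re_lt_neg_two hw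
  have hw2 := hne _ h2
  have hw1 := hne _ h1
  have hw0 := hne _ h0
  have hshift : ∀ n : ℕ, cexp ((n + w) * Real.log K) = K ^ n * cexp (w * Real.log K) := fun n => by
    rw [add_mul, exp_add, exp_nat_mul, ← ofReal_exp, Real.exp_log hK]
  have e1 := hshift 1
  have e2 := hshift 2
  push_cast at e1 e2
  rw [integral_Ioi_quadratic_cexp hw, e1, e2]
  field_simp
  ring

/-- Fourier transform of the power call payoff of order 2, `f(x) = ((e^x - K)⁺)²`, `K > 0`:
for `z ∈ ℂ` with `Im z ∈ (2,∞)`, `∫_ℝ e^{izx} f(x) dx` exists and equals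
`-2 K^{2+iz}/(iz(1+iz)(2+iz))`. -/
theorem fourier_power_call (K : ℝ) (hK : 0 < K) (z : ℂ) (hz : 2 < z.im) :
    Integrable (fun x : ℝ =>
      Complex.exp (Complex.I * z * x) * (((max (Real.exp x - K) 0) ^ 2 : ℝ) : ℂ))
      (volume : Measure ℝ) ∧
    ∫ x : ℝ, Complex.exp (Complex.I * z * x) * (((max (Real.exp x - K) 0) ^ 2 : ℝ) : ℂ) =
      - 2 * Complex.exp ((2 + Complex.I * z) * Real.log K) /
        (Complex.I * z * (1 + Complex.I * z) * (2 + Complex.I * z)) := by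
  have hw : (Complex.I * z).re < -2 := by simpa using hz
  simp_rw [cexp_mul_sq_max_sub_eq_indicator hK]
  exact ⟨(integrable_indicator_iff measurableSet_Ioi).2
      (integrableOn_Ioi_quadratic_cexp hw _ _),
    by rw [integral_indicator measurableSet_Ioi, integral_Ioi_log_quadratic_cexp hK hw]⟩
end

section
/- Let H be a 2-dimensional NIG random vector with parameters α > 0, δ > 0, β, μ ∈ ℝ², and Δ a symmetric positive-definite 2×2 matrix, and let R ∈ ℝ² satisfy α² − ⟨β+R, Δ(β+R)⟩ ≥ 0. Then for all u ∈ ℝ², Re(log M_H(R+iu)) ≤ ⟨μ,R⟩ + δ√(α² − ⟨β,Δβ⟩) − δ √(λ_min) |u|, where λ_min is the smallest eigenvalue of Δ and log M_H(w) = ⟨w,μ⟩ + δ(√(α² − ⟨β,Δβ⟩) − √(α² − ⟨β+w, Δ(β+w)⟩)) with the complex bilinear product ⟨u,v⟩ = Σᵢ uᵢvᵢ and the principal square root. -/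
/-!
Writing `w = β + R + iu`, the bilinear form splits as
`⟨w, Δw⟩ = ⟨β+R, Δ(β+R)⟩ - ⟨u, Δu⟩ + 2i⟨β+R, Δu⟩`, so the radicand `z = α² - ⟨w, Δw⟩` has
`Re z ≥ λ_min |u|²` by the hypothesis on `R` and the Rayleigh bound `⟨u, Δu⟩ ≥ λ_min |u|²`.
Since `Re √z = √((|z| + Re z)/2) ≥ √(Re z)`, this gives `Re √z ≥ √λ_min |u|`, and the
remaining terms of `Re log M_H(R + iu)` are real.
-/

open Complex Matrix
open scoped MatrixOrder

theorem Matrix.IsHermitian.algebraMap_iInf_eigenvalues_le {𝕜 n : Type*} [RCLike 𝕜] [Fintype n]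
    [DecidableEq n] {A : Matrix n n 𝕜} (hA : A.IsHermitian) :
    algebraMap ℝ (Matrix n n 𝕜) (⨅ i, hA.eigenvalues i) ≤ A := by
  refine algebraMap_le_of_le_spectrum (fun x hx => ?_) hA
  rw [hA.spectrum_real_eq_range_eigenvalues] at hx
  obtain ⟨i, rfl⟩ := hx
  exact ciInf_le (Set.finite_range _).bddBelow i

theorem Matrix.IsHermitian.iInf_eigenvalues_mul_le_re_dotProduct_mulVec {𝕜 n : Type*} [RCLike 𝕜]
    [Fintype n] [DecidableEq n] {A : Matrix n n 𝕜} (hA : A.IsHermitian) (x : n → 𝕜) :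
    (⨅ i, hA.eigenvalues i) * RCLike.re (star x ⬝ᵥ x) ≤ RCLike.re (star x ⬝ᵥ A *ᵥ x) := by
  have := hA.algebraMap_iInf_eigenvalues_le.re_dotProduct_nonneg x
  rw [Algebra.algebraMap_eq_smul_one, sub_mulVec, dotProduct_sub, smul_mulVec, one_mulVec,
    dotProduct_smul, map_sub, RCLike.smul_re] at this
  linarith

theorem Complex.sqrt_re_le_re_cpow_inv_two (z : ℂ) : √z.re ≤ (z ^ (2⁻¹ : ℂ)).re := by
  rw [cpow_inv_two_re]
  exact Real.sqrt_le_sqrt (by linarith [re_le_norm z])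

theorem Matrix.re_sum_mul_map_ofReal_mulVec {n : Type*} [Fintype n] (A : Matrix n n ℝ)
    (v u : n → ℝ) :
    (∑ i, ((v i : ℂ) + I * u i) * (A.map ofReal *ᵥ fun j => (v j : ℂ) + I * u j) i).re =
      v ⬝ᵥ A *ᵥ v - u ⬝ᵥ A *ᵥ u := by
  simp only [mulVec, dotProduct, map_apply, re_sum, Finset.mul_sum, ← Finset.sum_sub_distrib]
  refine Finset.sum_congr rfl fun i _ => Finset.sum_congr rfl fun j _ => ?_
  simp only [mul_re, mul_im, add_re, add_im, I_re, I_im, ofReal_re, ofReal_im]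
  ring

theorem nig2d_mgf_decay_general (α δ : ℝ) (hδ : 0 < δ)
    (β μ R : Fin 2 → ℝ) (Δ : Matrix (Fin 2) (Fin 2) ℝ)
    (hΔsymm : Δ.IsHermitian)
    (hR : 0 ≤ α ^ 2 - ∑ i, (β i + R i) * Δ.mulVec (β + R) i)
    (u : Fin 2 → ℝ) :
    ((∑ i, ((R i : ℂ) + Complex.I * (u i : ℂ)) * (μ i : ℂ)) +
        (δ : ℂ) * (((Real.sqrt (α ^ 2 - ∑ i, β i * Δ.mulVec β i) : ℝ) : ℂ) -
          ((α ^ 2 : ℂ) - ∑ i, ((β i : ℂ) + (R i : ℂ) + Complex.I * (u i : ℂ)) *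
              (Δ.map (Complex.ofReal)).mulVec
                (fun j => (β j : ℂ) + (R j : ℂ) + Complex.I * (u j : ℂ)) i) ^
            (1 / 2 : ℂ))).re ≤
      (∑ i, μ i * R i) + δ * Real.sqrt (α ^ 2 - ∑ i, β i * Δ.mulVec β i) -
        δ * Real.sqrt (⨅ i, hΔsymm.eigenvalues i) * Real.sqrt (∑ i, u i ^ 2) := by
  have hβR : ∀ i, (β i : ℂ) + R i = ((β + R) i : ℂ) := by simp
  simp_rw [hβR]
  set z : ℂ := α ^ 2 - ∑ i, (((β + R) i : ℂ) + I * u i) *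
    (Δ.map ofReal *ᵥ fun j => ((β + R) j : ℂ) + I * u j) i
  have hz : (⨅ i, hΔsymm.eigenvalues i) * ∑ i, u i ^ 2 ≤ z.re := by
    have hquad := hΔsymm.iInf_eigenvalues_mul_le_re_dotProduct_mulVec u
    simp only [star_trivial, RCLike.re_to_real] at hquad
    rw [show u ⬝ᵥ u = ∑ i, u i ^ 2 by simp only [dotProduct, sq]] at hquad
    change 0 ≤ α ^ 2 - (β + R) ⬝ᵥ Δ *ᵥ (β + R) at hR
    simp only [z, sub_re, ← ofReal_pow, ofReal_re, re_sum_mul_map_ofReal_mulVec]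
    linarith
  have hsqrt : √(⨅ i, hΔsymm.eigenvalues i) * √(∑ i, u i ^ 2) ≤ (z ^ (1 / 2 : ℂ)).re := by
    rw [← Real.sqrt_mul' _ (by positivity), one_div]
    exact (Real.sqrt_le_sqrt hz).trans z.sqrt_re_le_re_cpow_inv_two
  have hlhs : ((∑ i, ((R i : ℂ) + I * u i) * μ i) +
      δ * ((√(α ^ 2 - ∑ i, β i * (Δ *ᵥ β) i) : ℂ) - z ^ (1 / 2 : ℂ))).re =
      ∑ i, μ i * R i + δ * (√(α ^ 2 - ∑ i, β i * (Δ *ᵥ β) i) - (z ^ (1 / 2 : ℂ)).re) := by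
    simp [mul_comm]
  rw [hlhs]
  linarith [mul_le_mul_of_nonneg_left hsqrt hδ.le]

/-- Exponential decay bound for the 2d NIG moment generating function: for a 2d NIG law
with parameters `α > 0`, `δ > 0`, `β, μ ∈ ℝ²`, `Δ` symmetric positive definite, and a
dampening vector `R` with `α² - ⟨β+R, Δ(β+R)⟩ ≥ 0`, for all `u ∈ ℝ²`,
`Re(log M_H(R+iu)) ≤ ⟨μ,R⟩ + δ√(α² - ⟨β,Δβ⟩) - δ √(λ_min) |u|`, where `λ_min` is the
smallest eigenvalue of `Δ`, the bilinear product `⟨u,v⟩ = Σᵢ uᵢvᵢ` is extended to `ℂ²`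
without conjugation, and `log M_H(w) = ⟨w,μ⟩ + δ(√(α² - ⟨β,Δβ⟩) - √(α² - ⟨β+w,Δ(β+w)⟩))`
with the principal complex square root. -/
theorem nig2d_mgf_decay (α δ : ℝ) (hα : 0 < α) (hδ : 0 < δ)
    (β μ R : Fin 2 → ℝ) (Δ : Matrix (Fin 2) (Fin 2) ℝ)
    (hΔsymm : Δ.IsHermitian) (hΔpos : Δ.PosDef)
    (hR : 0 ≤ α ^ 2 - ∑ i, (β i + R i) * Δ.mulVec (β + R) i)
    (u : Fin 2 → ℝ) :
    ((∑ i, ((R i : ℂ) + Complex.I * (u i : ℂ)) * (μ i : ℂ)) +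
        (δ : ℂ) * (((Real.sqrt (α ^ 2 - ∑ i, β i * Δ.mulVec β i) : ℝ) : ℂ) -
          ((α ^ 2 : ℂ) - ∑ i, ((β i : ℂ) + (R i : ℂ) + Complex.I * (u i : ℂ)) *
              (Δ.map (Complex.ofReal)).mulVec
                (fun j => (β j : ℂ) + (R j : ℂ) + Complex.I * (u j : ℂ)) i) ^
            (1 / 2 : ℂ))).re ≤
      (∑ i, μ i * R i) + δ * Real.sqrt (α ^ 2 - ∑ i, β i * Δ.mulVec β i) -
        δ * Real.sqrt (⨅ i, hΔsymm.eigenvalues i) * Real.sqrt (∑ i, u i ^ 2) :=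
  nig2d_mgf_decay_general α δ hδ β μ R Δ hΔsymm hR u
end

section
/- Let d ≥ 1, K > 0, and f(x) = (e^{x₁} ∧ ⋯ ∧ e^{x_d} − K)⁺ for x ∈ ℝ^d, the payoff of a call on the minimum of d assets. For z ∈ ℂ^d with Im z_j > 0 for all j and Σ_j Im z_j > 1, the Fourier transform ∫_{ℝ^d} e^{i⟨z,x⟩} f(x) dx exists (as an absolutely convergent integral) and equals −K^{1+iΣ_j z_j} / ((−1)^d (1 + iΣ_j z_j) Π_j (i z_j)). -/
/-!
Layer cake: `(m - K)⁺ = ∫ 1{K < u < m} du`, so the integrand is the `u`-integral of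
`1{K < u < min_j e^{x_j}} e^{i⟨z,x⟩}`. For fixed `u > K` this is `e^{i⟨z,x⟩}` restricted to the
orthant `{x_j > log u}`, which factorizes over the coordinates and integrates to
`∏_j (-u^{i z_j} / (i z_j))`. The same computation with `|e^{i z_j x_j}| = e^{-x_j Im z_j}` gives
`u^{-Σ_j Im z_j} / ∏_j Im z_j`, integrable on `(K, ∞)` because `Σ_j Im z_j > 1`; this justifies
Fubini, and `∫_K^∞ u^{iΣ_j z_j} du = -K^{1+iΣ_j z_j} / (1 + iΣ_j z_j)` finishes the computation.
-/

open MeasureTheory Complex Set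

section Orthant

variable {ι : Type*} [Fintype ι]

noncomputable def orthantExp (z : ι → ℂ) (a : ℝ) (x : ι → ℝ) : ℂ :=
  ∏ j, (Ioi a).indicator (fun u : ℝ => cexp (I * z j * u)) (x j)

lemma orthantExp_eq_ite (z : ι → ℂ) (a : ℝ) (x : ι → ℝ) :
    orthantExp z a x = if ∀ j, a < x j then cexp (I * ∑ j, z j * x j) else 0 := by
  split_ifs with h
  · rw [orthantExp, Finset.mul_sum, exp_sum]
    exact Finset.prod_congr rfl fun j _ => by rw [indicator_of_mem (mem_Ioi.2 (h j)), mul_assoc]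
  · obtain ⟨j, hj⟩ := not_forall.1 h
    exact Finset.prod_eq_zero (Finset.mem_univ j) (indicator_of_notMem hj _)

variable {z : ι → ℂ}

lemma integrable_orthantExp (hz : ∀ j, 0 < (z j).im) (a : ℝ) : Integrable (orthantExp z a) :=
  Integrable.fintype_prod fun j => (integrable_indicator_iff measurableSet_Ioi).2 <|
    integrableOn_exp_mul_complex_Ioi (by simpa using hz j) a

lemma integral_orthantExp (hz : ∀ j, 0 < (z j).im) (a : ℝ) :
    ∫ x, orthantExp z a x =
      (-1) ^ Fintype.card ι / (∏ j, (I * z j)) * cexp (I * (∑ j, z j) * a) := by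
  have hfactor (j : ι) : ∫ u in Ioi a, cexp (I * z j * u) = -cexp (I * z j * a) / (I * z j) :=
    integral_exp_mul_complex_Ioi (by simpa using hz j) a
  simp only [orthantExp, integral_fintype_prod_volume_eq_prod,
    integral_indicator measurableSet_Ioi, hfactor, neg_div, Finset.prod_neg,
    Finset.prod_div_distrib, ← exp_sum, ← Finset.sum_mul, ← Finset.mul_sum, Finset.card_univ]
  ring

lemma integral_norm_orthantExp (hz : ∀ j, 0 < (z j).im) (a : ℝ) :
    ∫ x, ‖orthantExp z a x‖ = Real.exp (-(∑ j, (z j).im) * a) / ∏ j, (z j).im := by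
  have hnorm (j : ι) (u : ℝ) : ‖cexp (I * z j * u)‖ = Real.exp (-(z j).im * u) := by
    simp [norm_exp]
  have hfactor (j : ι) :
      ∫ u in Ioi a, Real.exp (-(z j).im * u) = Real.exp (-(z j).im * a) / (z j).im := by
    rw [integral_exp_mul_Ioi (by linarith [hz j]), neg_div_neg_eq]
  simp only [orthantExp, norm_prod, norm_indicator_eq_indicator_norm, hnorm,
    integral_fintype_prod_volume_eq_prod, integral_indicator measurableSet_Ioi, hfactor,
    Finset.prod_div_distrib, ← Real.exp_sum, ← Finset.sum_mul, Finset.sum_neg_distrib]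

end Orthant

section MinCall

variable {ι : Type*} [Fintype ι] [Nonempty ι]

noncomputable def minExp (x : ι → ℝ) : ℝ :=
  Finset.univ.inf' Finset.univ_nonempty fun j => Real.exp (x j)

lemma continuous_minExp : Continuous (minExp : (ι → ℝ) → ℝ) :=
  Continuous.finset_inf'_apply _ fun j _ => (continuous_apply j).rexp

lemma orthantExp_log_eq {u : ℝ} (hu : 0 < u) (z : ι → ℂ) (x : ι → ℝ) :
    orthantExp z (Real.log u) x = if u < minExp x then cexp (I * ∑ j, z j * x j) else 0 := by
  simp only [orthantExp_eq_ite, minExp, Finset.lt_inf'_iff, Finset.mem_univ, true_implies,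
    Real.log_lt_iff_lt_exp hu]

noncomputable def minCallLayer (K : ℝ) (z : ι → ℂ) (p : ℝ × (ι → ℝ)) : ℂ :=
  if K < p.1 ∧ p.1 < minExp p.2 then cexp (I * ∑ j, z j * p.2 j) else 0

variable {K : ℝ} {z : ι → ℂ}

lemma measurable_minCallLayer : Measurable (minCallLayer K z) :=
  Measurable.ite ((measurableSet_lt measurable_const measurable_fst).inter
    (measurableSet_lt measurable_fst (continuous_minExp.measurable.comp measurable_snd)))
    (Continuous.measurable (by fun_prop)) measurable_const

lemma minCallLayer_eq (hK : 0 ≤ K) (u : ℝ) (x : ι → ℝ) :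
    minCallLayer K z (u, x) = if K < u then orthantExp z (Real.log u) x else 0 := by
  by_cases hu : K < u
  · simp [minCallLayer, hu, orthantExp_log_eq (hK.trans_lt hu)]
  · simp [minCallLayer, hu]

lemma integral_minCallLayer_fst (x : ι → ℝ) :
    ∫ u, minCallLayer K z (u, x) = cexp (I * ∑ j, z j * x j) * (max (minExp x - K) 0 : ℝ) := by
  have h : (fun u => minCallLayer K z (u, x)) =
      (Ioo K (minExp x)).indicator fun _ => cexp (I * ∑ j, z j * x j) := by
    ext u; simp [minCallLayer, indicator_apply]
  rw [h, integral_indicator_const _ measurableSet_Ioo, Real.volume_real_Ioo, real_smul, mul_comm]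

lemma integral_minCallLayer_snd (hK : 0 ≤ K) (hz : ∀ j, 0 < (z j).im) (u : ℝ) :
    ∫ x, minCallLayer K z (u, x) = (Ioi K).indicator
      (fun u : ℝ => (-1) ^ Fintype.card ι / (∏ j, (I * z j)) * (u : ℂ) ^ (I * ∑ j, z j)) u := by
  by_cases hu : K < u
  · have hu0 : 0 < u := hK.trans_lt hu
    simp only [minCallLayer_eq hK, hu, if_true, integral_orthantExp hz,
      indicator_of_mem (mem_Ioi.2 hu), cpow_def_of_ne_zero (ofReal_ne_zero.2 hu0.ne'),
      ← ofReal_log hu0.le, mul_comm]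
  · simp [minCallLayer_eq hK, hu]

lemma integral_norm_minCallLayer_snd (hK : 0 ≤ K) (hz : ∀ j, 0 < (z j).im) (u : ℝ) :
    ∫ x, ‖minCallLayer K z (u, x)‖ =
      (Ioi K).indicator (fun u => u ^ (-∑ j, (z j).im) / ∏ j, (z j).im) u := by
  by_cases hu : K < u
  · simp only [minCallLayer_eq hK, hu, if_true, integral_norm_orthantExp hz,
      indicator_of_mem (mem_Ioi.2 hu), Real.rpow_def_of_pos (hK.trans_lt hu), mul_comm]
  · simp [minCallLayer_eq hK, hu]

lemma integrable_minCallLayer (hK : 0 < K) (hz : ∀ j, 0 < (z j).im)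
    (hzsum : 1 < ∑ j, (z j).im) : Integrable (minCallLayer K z) (volume.prod volume) := by
  refine (integrable_prod_iff measurable_minCallLayer.aestronglyMeasurable).2 ⟨?_, ?_⟩
  · refine ae_of_all _ fun u => ?_
    by_cases hu : K < u
    · simpa [minCallLayer_eq hK.le, hu] using integrable_orthantExp hz (Real.log u)
    · simp [minCallLayer_eq hK.le, hu]
  · simp only [integral_norm_minCallLayer_snd hK.le hz]
    exact (integrable_indicator_iff measurableSet_Ioi).2
      ((integrableOn_Ioi_rpow_of_lt (neg_lt_neg hzsum) hK).div_const _)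

lemma integrable_fourier_minCall (hK : 0 < K) (hz : ∀ j, 0 < (z j).im)
    (hzsum : 1 < ∑ j, (z j).im) :
    Integrable fun x : ι → ℝ => cexp (I * ∑ j, z j * x j) * (max (minExp x - K) 0 : ℝ) :=
  (integrable_minCallLayer hK hz hzsum).integral_prod_right.congr
    (ae_of_all _ integral_minCallLayer_fst)

lemma integral_fourier_minCall (hK : 0 < K) (hz : ∀ j, 0 < (z j).im)
    (hzsum : 1 < ∑ j, (z j).im) :
    ∫ x : ι → ℝ, cexp (I * ∑ j, z j * x j) * (max (minExp x - K) 0 : ℝ) =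
      -cexp ((1 + I * ∑ j, z j) * Real.log K) /
        ((-1) ^ Fintype.card ι * (1 + I * ∑ j, z j) * ∏ j, (I * z j)) := by
  have hs : (I * ∑ j, z j).re < -1 := by simpa [im_sum] using neg_lt_neg hzsum
  have hs1 : 1 + I * ∑ j, z j ≠ 0 :=
    ne_of_apply_ne re (by simp only [add_re, one_re, zero_re]; linarith)
  have hprod : ∏ j, (I * z j) ≠ 0 :=
    Finset.prod_ne_zero_iff.2 fun j _ => mul_ne_zero I_ne_zero fun h => by simpa [h] using hz j
  calc ∫ x : ι → ℝ, cexp (I * ∑ j, z j * x j) * (max (minExp x - K) 0 : ℝ)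
      = ∫ u, ∫ x, minCallLayer K z (u, x) := by
        simp only [← integral_minCallLayer_fst]
        exact (integral_integral_swap (f := fun u x => minCallLayer K z (u, x))
          (integrable_minCallLayer hK hz hzsum)).symm
    _ = ∫ u in Ioi K, (-1) ^ Fintype.card ι / (∏ j, (I * z j)) * (u : ℂ) ^ (I * ∑ j, z j) := by
        simp only [integral_minCallLayer_snd hK.le hz, integral_indicator measurableSet_Ioi]
    _ = (-1) ^ Fintype.card ι / (∏ j, (I * z j)) *
          (-(K : ℂ) ^ (I * ∑ j, z j + 1) / (I * ∑ j, z j + 1)) := by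
        rw [integral_const_mul, integral_Ioi_cpow_of_lt hs hK]
    _ = _ := by
        rw [add_comm _ (1 : ℂ), cpow_def_of_ne_zero (ofReal_ne_zero.2 hK.ne'), ← ofReal_log hK.le]
        field_simp
        rw [← pow_mul, pow_mul', neg_one_sq, one_pow]

end MinCall

/-- Fourier transform of the payoff of a call on the minimum of `d ≥ 1` assets,
`f(x) = (e^{x₁} ∧ ⋯ ∧ e^{x_d} - K)⁺`, `K > 0` (here the dimension is `d+1 ≥ 1`): for
`z ∈ ℂ^d` with `Im z_j > 0` for all `j` and `Σ_j Im z_j > 1`, the Fourier transform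
`∫_{ℝ^d} e^{i⟨z,x⟩} f(x) dx` exists as an absolutely convergent integral and equals
`-K^{1+iΣ_j z_j} / ((-1)^d (1+iΣ_j z_j) Π_j (i z_j))`. -/
theorem fourier_min_call (d : ℕ) (K : ℝ) (hK : 0 < K)
    (z : Fin (d + 1) → ℂ) (hz : ∀ j, 0 < (z j).im) (hzsum : 1 < ∑ j, (z j).im) :
    Integrable (fun x : Fin (d + 1) → ℝ =>
      Complex.exp (Complex.I * ∑ j, z j * (x j : ℂ)) *
        ((max ((Finset.univ.inf' Finset.univ_nonempty fun j => Real.exp (x j)) - K) 0 : ℝ) : ℂ))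
      (volume : Measure (Fin (d + 1) → ℝ)) ∧
    ∫ x : Fin (d + 1) → ℝ,
        Complex.exp (Complex.I * ∑ j, z j * (x j : ℂ)) *
          ((max ((Finset.univ.inf' Finset.univ_nonempty fun j => Real.exp (x j)) - K) 0 : ℝ) : ℂ) =
      - Complex.exp ((1 + Complex.I * ∑ j, z j) * Real.log K) /
          ((-1 : ℂ) ^ (d + 1) * (1 + Complex.I * ∑ j, z j) * ∏ j, (Complex.I * z j)) := by
  refine ⟨integrable_fourier_minCall hK hz hzsum, ?_⟩
  simpa only [Fintype.card_fin, minExp] using integral_fourier_minCall hK hz hzsum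
end
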